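/- arXiv:1109.1772 — 4 statements merged into one kernel-verified Lean document; each statement's English description precedes it below -/
import Mathlib

section
/- If a, b, c are pairwise coprime polynomials over ℂ, not all constant, satisfying a + b = c, then max{deg a, deg b, deg c} is strictly less than the number of distinct complex roots of the product abc. -/
/-!
Snyder's Wronskian argument (`Polynomial.abc`) gives `deg a, deg b, deg c < deg (rad (abc))`
unless `a' = b' = c' = 0`, which in characteristic zero makes all three constant. Over an
algebraically closed field `rad (abc)` is squarefree and splits, so its degree is the number
of distinct roots of `abc`.
-/

open Polynomial UniqueFactorizationMonoid

namespace Polynomial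

variable {k : Type*} [Field k]

theorem roots_toFinset_radical [DecidableEq k] {p : k[X]} (hp : p ≠ 0) :
    (radical p).roots.toFinset = p.roots.toFinset := by
  ext x
  have hx : X - C x ∣ radical p ↔ X - C x ∣ p :=
    dvd_radical_iff (prime_X_sub_C x).isRadical hp
  simp only [Multiset.mem_toFinset, mem_roots radical_ne_zero, mem_roots hp, ← dvd_iff_isRoot, hx]

theorem natDegree_radical_eq_card_roots_toFinset [IsAlgClosed k] [DecidableEq k] {p : k[X]}
    (hp : p ≠ 0) : (radical p).natDegree = p.roots.toFinset.card := by
  have hsep : (radical p).Separable := PerfectField.separable_iff_squarefree.mpr squarefree_radical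
  rw [← roots_toFinset_radical hp, Multiset.toFinset_card_of_nodup (nodup_roots hsep),
    IsAlgClosed.card_roots_eq_natDegree]

variable {R : Type*} [CommRing R] [IsDomain R]

theorem natDegree_eq_zero_of_isCoprime_of_add_eq_of_mul_eq_zero {a b c : R[X]}
    (hab : IsCoprime a b) (habc : a + b = c) (h0 : a * b * c = 0) :
    a.natDegree = 0 ∧ b.natDegree = 0 ∧ c.natDegree = 0 := by
  subst habc
  rcases mul_eq_zero.mp h0 with h0 | hc
  · rcases mul_eq_zero.mp h0 with rfl | rfl
    · simpa using natDegree_eq_zero_of_isUnit (isCoprime_zero_left.mp hab)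
    · simpa using natDegree_eq_zero_of_isUnit (isCoprime_zero_right.mp hab)
  · obtain rfl : a = -b := eq_neg_of_add_eq_zero_left hc
    have hb := natDegree_eq_zero_of_isUnit
      (isCoprime_self.mp ((IsCoprime.neg_left_iff b b).mp hab))
    simp [hb]

end Polynomial

theorem mason_stothers_general (a b c : Polynomial ℂ)
    (hab : IsCoprime a b)
    (habc : a + b = c)
    (hconst : ¬(a.natDegree = 0 ∧ b.natDegree = 0 ∧ c.natDegree = 0)) :
    max (max a.natDegree b.natDegree) c.natDegree < (a * b * c).roots.toFinset.card := by
  have h0 : a * b * c ≠ 0 := fun h0 =>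
    hconst (natDegree_eq_zero_of_isCoprime_of_add_eq_of_mul_eq_zero hab habc h0)
  have ha : a ≠ 0 := left_ne_zero_of_mul (left_ne_zero_of_mul h0)
  have hb : b ≠ 0 := right_ne_zero_of_mul (left_ne_zero_of_mul h0)
  have hc : -c ≠ 0 := neg_ne_zero.mpr (right_ne_zero_of_mul h0)
  have hsum : a + b + -c = 0 := by rw [habc, add_neg_cancel]
  have hrad : (radical (a * b * -c)).natDegree = (a * b * c).roots.toFinset.card := by
    rw [mul_neg, UniqueFactorizationDomain.radical_neg, natDegree_radical_eq_card_roots_toFinset h0]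
  rcases Polynomial.abc ha hb hc hab hsum with ⟨hda, hdb, hdc⟩ | ⟨hda, hdb, hdc⟩
  · rw [hrad, natDegree_neg] at hdc
    rw [hrad] at hda hdb
    omega
  · rw [derivative_neg, neg_eq_zero] at hdc
    exact (hconst ⟨derivative_eq_zero.mp hda, derivative_eq_zero.mp hdb,
      derivative_eq_zero.mp hdc⟩).elim

/-- Mason–Stothers theorem: if `a`, `b`, `c` are pairwise coprime polynomials over `ℂ`,
not all constant, with `a + b = c`, then `max {deg a, deg b, deg c}` is strictly less
than the number of distinct complex roots of `a * b * c`. -/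
theorem mason_stothers (a b c : Polynomial ℂ)
    (hab : IsCoprime a b) (hbc : IsCoprime b c) (hac : IsCoprime a c)
    (habc : a + b = c)
    (hconst : ¬(a.natDegree = 0 ∧ b.natDegree = 0 ∧ c.natDegree = 0)) :
    max (max a.natDegree b.natDegree) c.natDegree < (a * b * c).roots.toFinset.card :=
  mason_stothers_general a b c hab habc hconst
end

section
/- There are no polynomials P, Q, R over ℂ, not all constant, with P, Q, R pairwise coprime, satisfying Pⁿ + Qⁿ = Rⁿ for any integer n ≥ 3. -/
/-!
When none of `P, Q, R` vanishes this is Mathlib's `Polynomial.flt`, a consequence of the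
Mason–Stothers theorem. If one of them vanishes, the coprimality of `P` and `Q` forces the
other two to be units, hence constants.
-/

open Polynomial

theorem IsCoprime.isUnit_of_pow_add_pow_eq_zero {A : Type*} [CommRing A] {n : ℕ} (hn : n ≠ 0)
    {a b : A} (hab : IsCoprime a b) (h : a ^ n + b ^ n = 0) : IsUnit a ∧ IsUnit b := by
  have ha : a ^ n = -b ^ n := eq_neg_of_add_eq_zero_left h
  have hb : IsUnit (b ^ n) := by
    have hcop := hab.pow (m := n) (n := n)
    rwa [ha, IsCoprime.neg_left_iff, isCoprime_self] at hcop
  exact ⟨(isUnit_pow_iff hn).mp (ha ▸ hb.neg), (isUnit_pow_iff hn).mp hb⟩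

theorem Polynomial.natDegree_eq_zero_of_pow_add_pow_eq_pow_of_eq_zero {K : Type*} [CommRing K]
    [NoZeroDivisors K] {n : ℕ} (hn : n ≠ 0) {a b c : K[X]} (hab : IsCoprime a b)
    (heq : a ^ n + b ^ n = c ^ n) (h0 : a = 0 ∨ b = 0 ∨ c = 0) :
    a.natDegree = 0 ∧ b.natDegree = 0 ∧ c.natDegree = 0 := by
  rcases h0 with rfl | rfl | rfl
  · have hb : IsUnit b := isCoprime_zero_left.mp hab
    have hc : IsUnit c := (isUnit_pow_iff hn).mp <| by
      rw [← heq, zero_pow hn, zero_add]; exact hb.pow n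
    exact ⟨natDegree_zero, natDegree_eq_zero_of_isUnit hb, natDegree_eq_zero_of_isUnit hc⟩
  · have ha : IsUnit a := isCoprime_zero_right.mp hab
    have hc : IsUnit c := (isUnit_pow_iff hn).mp <| by
      rw [← heq, zero_pow hn, add_zero]; exact ha.pow n
    exact ⟨natDegree_eq_zero_of_isUnit ha, natDegree_zero, natDegree_eq_zero_of_isUnit hc⟩
  · obtain ⟨ha, hb⟩ := hab.isUnit_of_pow_add_pow_eq_zero hn (heq.trans (zero_pow hn))
    exact ⟨natDegree_eq_zero_of_isUnit ha, natDegree_eq_zero_of_isUnit hb, natDegree_zero⟩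

theorem flt_polynomials_general (n : ℕ) (hn : 3 ≤ n) (P Q R : Polynomial ℂ)
    (hPQ : IsCoprime P Q)
    (hconst : ¬(P.natDegree = 0 ∧ Q.natDegree = 0 ∧ R.natDegree = 0)) :
    P ^ n + Q ^ n ≠ R ^ n := by
  intro heq
  have hn0 : n ≠ 0 := by omega
  apply hconst
  by_cases h0 : P = 0 ∨ Q = 0 ∨ R = 0
  · exact natDegree_eq_zero_of_pow_add_pow_eq_pow_of_eq_zero hn0 hPQ heq h0
  obtain ⟨hP, hQ, hR⟩ : P ≠ 0 ∧ Q ≠ 0 ∧ R ≠ 0 := by simpa only [not_or] using h0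
  exact Polynomial.flt hn (Nat.cast_ne_zero.mpr hn0) hP hQ hR hPQ heq

/-- Fermat's Last Theorem for polynomials over `ℂ`: there are no pairwise coprime
polynomials `P, Q, R`, not all constant, with `P^n + Q^n = R^n` for `n ≥ 3`. -/
theorem flt_polynomials (n : ℕ) (hn : 3 ≤ n) (P Q R : Polynomial ℂ)
    (hPQ : IsCoprime P Q) (hQR : IsCoprime Q R) (hPR : IsCoprime P R)
    (hconst : ¬(P.natDegree = 0 ∧ Q.natDegree = 0 ∧ R.natDegree = 0)) :
    P ^ n + Q ^ n ≠ R ^ n :=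
  flt_polynomials_general n hn P Q R hPQ hconst
end

section
/- Polynomials p₀, …, pₙ over ℂ are linearly dependent over ℂ if and only if their Wronskian W(p₀,…,pₙ) is the zero polynomial. -/
/-!
A dependence `∑ gⱼ pⱼ = 0` gives the kernel vector `(gⱼ)` of the Wronskian matrix, so `W = 0`.

Conversely, let the `pⱼ` be independent. If their degrees `dⱼ` are pairwise distinct, every term
of the Leibniz expansion of `W` has degree at most `∑ dⱼ - ∑ i`, and the coefficient there is
`∏ lc(pⱼ) · det (dⱼ.descFactorial i)`. Evaluating the monic basis `X(X-1)⋯(X-i+1)` at the `dⱼ`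
turns this determinant into a Vandermonde determinant, nonzero in characteristic zero. If two
degrees agree, the column operation `pₖ ↦ pₖ - c pⱼ` cancelling the leading term of `pₖ` preserves
`W` and independence and lowers `∑ dⱼ`, so induction on `∑ dⱼ` reduces to the distinct case.
-/

open Polynomial Matrix Finset

namespace Polynomial

variable {R : Type*} [CommRing R]

noncomputable def wronskianMatrix {m : ℕ} (p : Fin m → R[X]) : Matrix (Fin m) (Fin m) R[X] :=
  .of fun i j => derivative^[i] (p j)

theorem coeff_prod_sum_of_natDegree_le {ι : Type*} (s : Finset ι) (f : ι → R[X]) (d : ι → ℕ)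
    (h : ∀ i ∈ s, (f i).natDegree ≤ d i) :
    (∏ i ∈ s, f i).coeff (∑ i ∈ s, d i) = ∏ i ∈ s, (f i).coeff (d i) := by
  induction s using Finset.cons_induction with
  | empty => simp
  | cons a s _ ih =>
    rw [forall_mem_cons] at h
    rw [prod_cons, sum_cons, coeff_mul_add_eq_of_natDegree_le h.1
      ((natDegree_prod_le _ _).trans (sum_le_sum h.2)), ih h.2, prod_cons]

theorem coeff_prod_iterate_derivative {m : ℕ} (p : Fin m → R[X]) (σ : Equiv.Perm (Fin m)) :
    (∏ j, derivative^[σ j] (p j)).coeff (∑ j, (p j).natDegree - ∑ j : Fin m, (j : ℕ)) =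
      ∏ j, (p j).leadingCoeff * ((p j).natDegree.descFactorial (σ j) : R) := by
  by_cases! hσ : ∃ j, (p j).natDegree < σ j
  · obtain ⟨j, hj⟩ := hσ
    rw [prod_eq_zero (mem_univ j) (iterate_derivative_eq_zero hj), coeff_zero, eq_comm]
    exact prod_eq_zero (mem_univ j) (by simp [Nat.descFactorial_eq_zero_iff_lt.mpr hj])
  have hsum : ∑ j, (p j).natDegree - ∑ j : Fin m, (j : ℕ) = ∑ j, ((p j).natDegree - σ j) := by
    rw [sum_tsub_distrib _ fun j _ => hσ j, Equiv.sum_comp σ fun j : Fin m => (j : ℕ)]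
  rw [hsum, coeff_prod_sum_of_natDegree_le _ _ _ fun j _ => natDegree_iterate_derivative _ _]
  refine prod_congr rfl fun j _ => ?_
  rw [coeff_iterate_derivative, Nat.sub_add_cancel (hσ j), nsmul_eq_mul, coeff_natDegree,
    mul_comm]

theorem coeff_det_wronskianMatrix {m : ℕ} (p : Fin m → R[X]) :
    (wronskianMatrix p).det.coeff (∑ j, (p j).natDegree - ∑ j : Fin m, (j : ℕ)) =
      (Matrix.of fun i j : Fin m =>
        (p j).leadingCoeff * ((p j).natDegree.descFactorial i : R)).det := by
  simp only [det_apply', finsetSum_coeff, coeff_intCast_mul, wronskianMatrix, of_apply,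
    coeff_prod_iterate_derivative]

theorem det_descFactorial_ne_zero [IsDomain R] [CharZero R] {m : ℕ} {d : Fin m → ℕ}
    (hd : Function.Injective d) :
    (Matrix.of fun i j : Fin m => ((d j).descFactorial i : R)).det ≠ 0 := by
  have hvdm := det_eval_matrixOfPolynomials_eq_det_vandermonde (fun i => (d i : R))
    (fun j => descPochhammer R j) (fun j => descPochhammer_natDegree R j)
    (fun j => monic_descPochhammer R j)
  simp only [descPochhammer_eval_eq_descFactorial] at hvdm
  rw [← det_transpose]
  change (of fun i j : Fin m => ((d i).descFactorial j : R)).det ≠ 0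
  rw [← hvdm]
  exact det_vandermonde_ne_zero_iff.mpr (Nat.cast_injective.comp hd)

theorem det_wronskianMatrix_ne_zero_of_injective_natDegree [IsDomain R] [CharZero R] {m : ℕ}
    {p : Fin m → R[X]} (hp : ∀ j, p j ≠ 0) (hinj : Function.Injective fun j => (p j).natDegree) :
    (wronskianMatrix p).det ≠ 0 := by
  intro h
  have hdet := det_mul_row (fun j => (p j).leadingCoeff)
    (of fun i j : Fin m => ((p j).natDegree.descFactorial i : R))
  simp only [of_apply] at hdet
  have hcoeff := coeff_det_wronskianMatrix p
  rw [h, coeff_zero, hdet] at hcoeff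
  exact mul_ne_zero (prod_ne_zero_iff.mpr fun j _ => leadingCoeff_ne_zero.mpr (hp j))
    (det_descFactorial_ne_zero hinj) hcoeff.symm

-- `pₖ ↦ pₖ + a • pⱼ` is written in the shape used by `linearIndependent_add_smul_iff`.
theorem wronskianMatrix_add_single_smul {m : ℕ} (p : Fin m → R[X]) (j k : Fin m) (a : R) :
    wronskianMatrix (p + ((Pi.single k a : Fin m → R) · • p j)) =
      wronskianMatrix p * transvection j k (C a) := by
  refine Matrix.ext fun i l => ?_
  rcases eq_or_ne l k with rfl | hl
  · simp [wronskianMatrix, transvection, Matrix.mul_add, smul_eq_C_mul, iterate_derivative_C_mul,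
      mul_comm (C a)]
  · simp [wronskianMatrix, transvection, Matrix.mul_add, hl]

theorem det_wronskianMatrix_add_single_smul {m : ℕ} (p : Fin m → R[X]) {j k : Fin m}
    (hjk : j ≠ k) (a : R) :
    (wronskianMatrix (p + ((Pi.single k a : Fin m → R) · • p j))).det =
      (wronskianMatrix p).det := by
  rw [wronskianMatrix_add_single_smul, det_mul, det_transvection_of_ne _ _ hjk, mul_one]

theorem det_wronskianMatrix_eq_zero_of_not_linearIndependent [IsDomain R] {m : ℕ}
    {p : Fin m → R[X]} (hp : ¬ LinearIndependent R p) : (wronskianMatrix p).det = 0 := by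
  obtain ⟨g, hg, j, hj⟩ := Fintype.not_linearIndependent_iff.mp hp
  refine exists_mulVec_eq_zero_iff.mp ⟨C ∘ g, fun h => hj (C_eq_zero.mp (congrFun h j)), ?_⟩
  funext i
  have hderiv : derivative^[i] (∑ j, g j • p j) = 0 := by rw [hg, iterate_map_zero]
  rw [iterate_derivative_sum] at hderiv
  simp only [iterate_derivative_smul] at hderiv
  simpa [mulVec, dotProduct, wronskianMatrix, smul_eq_C_mul, mul_comm] using hderiv

section Field

variable {K : Type*} [Field K]

theorem exists_degree_add_smul_lt {f g : K[X]} (hf : f ≠ 0) (hg : g ≠ 0)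
    (h : f.natDegree = g.natDegree) : ∃ a : K, (f + a • g).degree < f.degree := by
  have hg' : g.leadingCoeff ≠ 0 := leadingCoeff_ne_zero.mpr hg
  have hc : f.leadingCoeff / g.leadingCoeff ≠ 0 := div_ne_zero (leadingCoeff_ne_zero.mpr hf) hg'
  refine ⟨-(f.leadingCoeff / g.leadingCoeff), ?_⟩
  rw [neg_smul, ← sub_eq_add_neg, smul_eq_C_mul]
  refine degree_sub_lt_left ?_ hf ?_
  · rw [degree_C_mul hc, degree_eq_natDegree hf, degree_eq_natDegree hg, h]
  · rw [leadingCoeff_mul, leadingCoeff_C, div_mul_cancel₀ _ hg']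

theorem det_wronskianMatrix_ne_zero [CharZero K] {m : ℕ} {p : Fin m → K[X]}
    (hp : LinearIndependent K p) : (wronskianMatrix p).det ≠ 0 := by
  induction hN : ∑ j, (p j).natDegree using Nat.strong_induction_on generalizing p with
  | _ N ih =>
  by_cases hinj : Function.Injective fun j => (p j).natDegree
  · exact det_wronskianMatrix_ne_zero_of_injective_natDegree hp.ne_zero hinj
  obtain ⟨k, j, hdeg, hkj⟩ : ∃ k j, (p k).natDegree = (p j).natDegree ∧ k ≠ j := by
    simpa [Function.Injective] using hinj
  obtain ⟨a, ha⟩ := exists_degree_add_smul_lt (hp.ne_zero k) (hp.ne_zero j) hdeg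
  set q := p + ((Pi.single k a : Fin m → K) · • p j)
  have hq : LinearIndependent K q :=
    (linearIndependent_add_smul_iff (Pi.single_eq_of_ne (M := fun _ => K) hkj.symm a)).mpr hp
  have hqk : (q k).natDegree < (p k).natDegree :=
    natDegree_lt_natDegree (hq.ne_zero k) (by simpa [q] using ha)
  have hle : ∀ l, (q l).natDegree ≤ (p l).natDegree := fun l => by
    rcases eq_or_ne l k with rfl | hl
    · exact hqk.le
    · simp [q, hl]
  rw [← det_wronskianMatrix_add_single_smul p hkj.symm a]
  exact ih _ (hN ▸ sum_lt_sum (fun l _ => hle l) ⟨k, mem_univ k, hqk⟩) hq rfl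

end Field

end Polynomial

/-- Polynomials `p₀, …, pₙ` over `ℂ` are linearly dependent over `ℂ` iff their Wronskian
`det (pⱼ^{(i)})_{0 ≤ i,j ≤ n}` is the zero polynomial. -/
theorem not_linearIndependent_iff_wronskian_eq_zero (n : ℕ) (p : Fin (n + 1) → Polynomial ℂ) :
    ¬ LinearIndependent ℂ p ↔
      Matrix.det
        (Matrix.of fun i j : Fin (n + 1) => (Polynomial.derivative^[(i : ℕ)] (p j))) = 0 :=
  ⟨det_wronskianMatrix_eq_zero_of_not_linearIndependent,
    fun h hp => det_wronskianMatrix_ne_zero hp h⟩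
end

section
/- Let f₀,…,fₙ be analytic functions on a domain, fₙ₊₁ = f₀ + ⋯ + fₙ, and W their Wronskian. If some fⱼ (0 ≤ j ≤ n+1) vanishes to order k > n at a point z₀, then W vanishes to order at least k − n at z₀. -/
/-!
Expanding the determinant, every term of the Wronskian contains a factor `f_j^{(σ j)}` with
`σ j ≤ n`, which vanishes to order at least `k - n`; orders add under products and do not drop
under sums. For `j = n + 1`, adding the other columns to column `0` replaces `f₀` by
`f₀ + ⋯ + fₙ` without changing the Wronskian near `z₀`.
-/

open Filter Topology

section AnalyticOrder

variable {𝕜 E : Type*} [NontriviallyNormedField 𝕜] [NormedAddCommGroup E] [NormedSpace 𝕜 E]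
  {z₀ : 𝕜}

theorem le_analyticOrderAt_sum {ι : Type*} {s : Finset ι} {f : ι → 𝕜 → E} {m : ℕ∞}
    (h : ∀ i ∈ s, m ≤ analyticOrderAt (f i) z₀) : m ≤ analyticOrderAt (∑ i ∈ s, f i) z₀ := by
  classical
  induction s using Finset.induction with
  | empty =>
    rw [Finset.sum_empty]
    exact le_top.trans_eq (analyticOrderAt_eq_top.2 (Eventually.of_forall fun _ => rfl)).symm
  | insert a s ha ih =>
    rw [Finset.sum_insert ha]
    simp only [Finset.mem_insert, forall_eq_or_imp] at h
    exact (le_min h.1 (ih h.2)).trans le_analyticOrderAt_add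

theorem analyticOrderAt_le_prod_of_mem {ι : Type*} {s : Finset ι} {f : ι → 𝕜 → 𝕜}
    (hf : ∀ i ∈ s, AnalyticAt 𝕜 (f i) z₀) {j : ι} (hj : j ∈ s) :
    analyticOrderAt (f j) z₀ ≤ analyticOrderAt (∏ i ∈ s, f i) z₀ := by
  classical
  rw [← Finset.mul_prod_erase s f hj, analyticOrderAt_mul (hf j hj)
    ((s.erase j).analyticAt_prod fun i hi => hf i (Finset.mem_of_mem_erase hi))]
  exact le_self_add

theorem AnalyticAt.iteratedDeriv [CompleteSpace E] {f : 𝕜 → E} (hf : AnalyticAt 𝕜 f z₀) (p : ℕ) :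
    AnalyticAt 𝕜 (iteratedDeriv p f) z₀ := by
  simpa only [iteratedDeriv_eq_iterate] using hf.iterated_deriv p

theorem natCast_le_analyticOrderAt_iteratedDeriv [CharZero 𝕜] [CompleteSpace E] {f : 𝕜 → E}
    (hf : AnalyticAt 𝕜 f z₀) {m p : ℕ} (h : ((m + p : ℕ) : ℕ∞) ≤ analyticOrderAt f z₀) :
    m ≤ analyticOrderAt (iteratedDeriv p f) z₀ := by
  rw [natCast_le_analyticOrderAt_iff_iteratedDeriv_eq_zero (hf.iteratedDeriv p)]
  rw [natCast_le_analyticOrderAt_iff_iteratedDeriv_eq_zero hf] at h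
  intro i hi
  rw [iteratedDeriv_eq_iterate, iteratedDeriv_eq_iterate, ← Function.iterate_add_apply,
    ← iteratedDeriv_eq_iterate]
  exact h _ (by omega)

end AnalyticOrder

section Wronskian

variable {𝕜 : Type*} [NontriviallyNormedField 𝕜]

noncomputable def wronskian {n : ℕ} (f : Fin n → 𝕜 → 𝕜) (w : 𝕜) : 𝕜 :=
  (Matrix.of fun i j : Fin n => iteratedDeriv (i : ℕ) (f j) w).det

theorem wronskian_eq_sum_perm {n : ℕ} (f : Fin n → 𝕜 → 𝕜) :
    wronskian f = ∑ σ : Equiv.Perm (Fin n),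
      (fun _ => ((Equiv.Perm.sign σ : ℤ) : 𝕜)) * ∏ i, iteratedDeriv (σ i : ℕ) (f i) := by
  ext w
  simp only [wronskian, Matrix.det_apply, Finset.sum_apply, Pi.mul_apply, Finset.prod_apply,
    Matrix.of_apply, Units.smul_def, zsmul_eq_mul]

theorem wronskian_update_sum {n : ℕ} {f : Fin n → 𝕜 → 𝕜} {w : 𝕜}
    (hf : ∀ j, ContDiffAt 𝕜 n (f j) w) (j : Fin n) :
    wronskian (Function.update f j fun z => ∑ i, f i z) w = wronskian f w := by
  let M := Matrix.of fun r c : Fin n => iteratedDeriv (r : ℕ) (f c) w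
  have hcol : (Matrix.of fun r c : Fin n =>
        iteratedDeriv (r : ℕ) (Function.update f j (fun z => ∑ i, f i z) c) w) =
      M.updateCol j fun r => ∑ i, (1 : 𝕜) • M r i := by
    ext r c
    rcases eq_or_ne c j with rfl | hc
    · simp only [M, Matrix.of_apply, Function.update_self, Matrix.updateCol_self, one_smul]
      exact iteratedDeriv_fun_sum fun i _ => (hf i).of_le (by exact_mod_cast r.is_lt.le)
    · simp [M, Function.update_of_ne hc, Matrix.updateCol_ne hc]
  rw [wronskian, hcol, Matrix.det_updateCol_sum M j fun _ => 1, one_smul]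
  rfl

variable [CompleteSpace 𝕜] {z₀ : 𝕜}

theorem AnalyticAt.wronskian {n : ℕ} {f : Fin n → 𝕜 → 𝕜} (hf : ∀ j, AnalyticAt 𝕜 (f j) z₀) :
    AnalyticAt 𝕜 (wronskian f) z₀ := by
  rw [wronskian_eq_sum_perm]
  exact Finset.analyticAt_sum _ fun σ _ => analyticAt_const.mul <|
    Finset.analyticAt_prod _ fun i _ => (hf i).iteratedDeriv _

theorem analyticOrderAt_wronskian_update_sum {n : ℕ} {f : Fin n → 𝕜 → 𝕜}
    (hf : ∀ j, AnalyticAt 𝕜 (f j) z₀) (j : Fin n) :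
    analyticOrderAt (wronskian (Function.update f j fun z => ∑ i, f i z)) z₀ =
      analyticOrderAt (wronskian f) z₀ := by
  refine analyticOrderAt_congr ?_
  filter_upwards [eventually_all.2 fun i => (hf i).eventually_analyticAt] with w hw
  exact wronskian_update_sum (fun i => (hw i).contDiffAt) j

theorem natCast_le_analyticOrderAt_wronskian [CharZero 𝕜] {n m : ℕ} {f : Fin (n + 1) → 𝕜 → 𝕜}
    (hf : ∀ j, AnalyticAt 𝕜 (f j) z₀) {j : Fin (n + 1)}
    (hj : ((m + n : ℕ) : ℕ∞) ≤ analyticOrderAt (f j) z₀) :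
    (m : ℕ∞) ≤ analyticOrderAt (wronskian f) z₀ := by
  rw [wronskian_eq_sum_perm]
  refine le_analyticOrderAt_sum fun σ _ => ?_
  have hprod : AnalyticAt 𝕜 (∏ i, iteratedDeriv (σ i : ℕ) (f i)) z₀ :=
    Finset.analyticAt_prod _ fun i _ => (hf i).iteratedDeriv _
  calc (m : ℕ∞)
      ≤ analyticOrderAt (iteratedDeriv (σ j : ℕ) (f j)) z₀ :=
        natCast_le_analyticOrderAt_iteratedDeriv (hf j) <| hj.trans' <| by
          gcongr
          exact (σ j).is_le
    _ ≤ analyticOrderAt (∏ i, iteratedDeriv (σ i : ℕ) (f i)) z₀ :=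
        analyticOrderAt_le_prod_of_mem (fun i _ => (hf i).iteratedDeriv _) (Finset.mem_univ j)
    _ ≤ _ := by
        rw [analyticOrderAt_mul analyticAt_const hprod]
        exact le_add_self

end Wronskian

/-- Let `f₀, …, fₙ` be analytic (at `z₀`), `fₙ₊₁ = f₀ + ⋯ + fₙ`, and `W` their Wronskian.
If some `fⱼ` (`0 ≤ j ≤ n+1`) vanishes to order `k > n` at `z₀`, then `W` vanishes to order
at least `k − n` at `z₀`. -/
theorem wronskian_vanishing_order (n : ℕ) (f : Fin (n + 1) → ℂ → ℂ) (z₀ : ℂ)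
    (hf : ∀ j, AnalyticAt ℂ (f j) z₀) (k : ℕ) (hk : n < k)
    (hvanish : (∃ j : Fin (n + 1), ∀ l < k, iteratedDeriv l (f j) z₀ = 0) ∨
      (∀ l < k, iteratedDeriv l (fun w => ∑ j, f j w) z₀ = 0)) :
    ∀ l < k - n,
      iteratedDeriv l (fun w => Matrix.det
        (Matrix.of fun i j : Fin (n + 1) => iteratedDeriv (i : ℕ) (f j) w)) z₀ = 0 := by
  change ∀ l < k - n, iteratedDeriv l (wronskian f) z₀ = 0
  rw [← natCast_le_analyticOrderAt_iff_iteratedDeriv_eq_zero (AnalyticAt.wronskian hf)]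
  rcases hvanish with ⟨j, hj⟩ | hsum
  · refine natCast_le_analyticOrderAt_wronskian hf (j := j) ?_
    rwa [Nat.sub_add_cancel hk.le, natCast_le_analyticOrderAt_iff_iteratedDeriv_eq_zero (hf j)]
  · set g := Function.update f 0 fun w => ∑ j, f j w
    have hg : ∀ j, AnalyticAt ℂ (g j) z₀ := by
      intro j
      rcases eq_or_ne j 0 with rfl | hj
      · simpa [g] using Finset.analyticAt_fun_sum _ fun i _ => hf i
      · simpa [g, Function.update_of_ne hj] using hf j
    rw [← analyticOrderAt_wronskian_update_sum hf 0]
    refine natCast_le_analyticOrderAt_wronskian hg (j := 0) ?_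
    rw [Nat.sub_add_cancel hk.le, natCast_le_analyticOrderAt_iff_iteratedDeriv_eq_zero (hg 0)]
    simpa [g] using hsum
end
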